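/- arXiv:1105.0165 — 3 statements merged into one kernel-verified Lean document; each statement's English description precedes it below -/
import Mathlib

section
/- The language L₃ = { w ∈ {a,b,c}* : |w|ₐ ≠ |w|_b and ( |w|ₐ = |w|_c or |w|_b = |w|_c ) } is not context-free, i.e., there is no context-free grammar generating L₃. -/
/-!
Pumping lemma: take a derivation `S ⇒ w` with the fewest rule applications. If `K` bounds the
lengths of right-hand sides and `k` is the number of nonterminals with rules, some subderivation
`A ⇒ w₁` has `K ^ k < |w₁| ≤ K ^ (k + 1)`; descending from it along `k` subderivations with
yields longer than `K ^ (k - 1)`, `K ^ (k - 2)`, … must repeat a nonterminal `B`, giving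
`B ⇒ v B y` and `B ⇒ x` with `|v x y| ≤ K ^ (k + 1)`. Minimality forces `v y ≠ []`.

For `L₃`, pump `aᵐ bᴺ cᵐ` with `N = p + 3` and `m = N + N!`. As `|v x y| ≤ p < N`, `v y` cannot
contain both `a` and `c`. Pumping once keeps `|w|_b < m`, so the result stays in `L₃` only if
`v y` consists of `b`s; then pumping `N! / |v y|_b` times more gives `|w|_a = |w|_b`.
-/

namespace ContextFreeGrammar

variable {T : Type*} {g : ContextFreeGrammar T}

variable (g) in
inductive DerivesIn : List (Symbol T g.NT) → List T → ℕ → Prop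
  | nil : DerivesIn [] [] 0
  | terminal {s w n} (t : T) : DerivesIn s w n → DerivesIn (.terminal t :: s) (t :: w) n
  | nonterminal {r s u w m n} : r ∈ g.rules → DerivesIn r.output u m → DerivesIn s w n →
      DerivesIn (.nonterminal r.input :: s) (u ++ w) (m + n + 1)

namespace DerivesIn

variable {s s' s₁ s₂ : List (Symbol T g.NT)} {w w₁ w₂ : List T} {n n₁ n₂ : ℕ}

theorem derives (h : g.DerivesIn s w n) : g.Derives s (w.map .terminal) := by
  induction h with
  | nil => exact Derives.refl _
  | terminal t _ ih => simpa using ih.append_left [.terminal t]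
  | nonterminal hr _ _ ihu ihw =>
      rw [List.map_append]
      exact (((Produces.single ⟨_, hr, .input_output⟩).trans ihu).append_right _).trans
        (ihw.append_left _)

theorem append (h₁ : g.DerivesIn s₁ w₁ n₁) (h₂ : g.DerivesIn s₂ w₂ n₂) :
    g.DerivesIn (s₁ ++ s₂) (w₁ ++ w₂) (n₁ + n₂) := by
  induction h₁ with
  | nil => simpa using h₂
  | terminal t _ ih => exact ih.terminal t
  | @nonterminal r s u w m n hr hu _ _ ih =>
      rw [List.cons_append, List.append_assoc, show m + n + 1 + n₂ = m + (n + n₂) + 1 by omega]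
      exact nonterminal hr hu ih

theorem exists_of_append (h : g.DerivesIn (s₁ ++ s₂) w n) :
    ∃ w₁ w₂ n₁ n₂, w = w₁ ++ w₂ ∧ n = n₁ + n₂ ∧ g.DerivesIn s₁ w₁ n₁ ∧ g.DerivesIn s₂ w₂ n₂ := by
  induction s₁ generalizing w n with
  | nil => exact ⟨[], w, 0, n, rfl, (zero_add n).symm, nil, h⟩
  | cons a s₁ ih =>
      cases h with
      | terminal t h =>
          obtain ⟨w₁, w₂, n₁, n₂, rfl, rfl, h₁, h₂⟩ := ih h
          exact ⟨t :: w₁, w₂, n₁, n₂, rfl, rfl, h₁.terminal t, h₂⟩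
      | nonterminal hr hu h =>
          obtain ⟨w₁, w₂, n₁, n₂, rfl, rfl, h₁, h₂⟩ := ih h
          exact ⟨_ ++ w₁, w₂, _ + n₁ + 1, n₂, (List.append_assoc ..).symm, by omega,
            nonterminal hr hu h₁, h₂⟩

theorem singleton {r : ContextFreeRule T g.NT} (hr : r ∈ g.rules) (h : g.DerivesIn r.output w n) :
    g.DerivesIn [.nonterminal r.input] w (n + 1) := by
  simpa using nonterminal hr h nil

theorem exists_of_singleton {A : g.NT} (h : g.DerivesIn [.nonterminal A] w n) :
    ∃ r ∈ g.rules, r.input = A ∧ ∃ m, g.DerivesIn r.output w m ∧ n = m + 1 := by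
  rcases h with _ | _ | ⟨hr, hu, ⟨⟩⟩
  exact ⟨_, hr, rfl, _, by simpa using hu, rfl⟩

theorem map_terminal (w : List T) : g.DerivesIn (w.map .terminal) w 0 := by
  induction w with
  | nil => exact nil
  | cons t w ih => exact ih.terminal t

theorem of_produces (hp : g.Produces s s') (h : g.DerivesIn s' w n) :
    g.DerivesIn s w (n + 1) := by
  obtain ⟨r, hr, hrw⟩ := hp
  obtain ⟨p, q, rfl, rfl⟩ := hrw.exists_parts
  obtain ⟨w₁, w', n₁, n', rfl, rfl, h₁, h'⟩ := exists_of_append (s₁ := p) (by simpa using h)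
  obtain ⟨w₂, w₃, n₂, n₃, rfl, rfl, h₂, h₃⟩ := exists_of_append h'
  simpa [add_assoc] using h₁.append (nonterminal hr h₂ h₃)

theorem exists_of_derives (h : g.Derives s (w.map .terminal)) : ∃ n, g.DerivesIn s w n := by
  induction h using Relation.ReflTransGen.head_induction_on with
  | refl => exact ⟨0, map_terminal w⟩
  | head hp _ ih =>
      obtain ⟨n, hn⟩ := ih
      exact ⟨n + 1, of_produces hp hn⟩

end DerivesIn

variable (g) in
/-- A one-hole context `u _ z` for `B` inside `s` costing `c` rule applications, described by
its action on derivations of `B`. -/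
def IsContext (s : List (Symbol T g.NT)) (B : g.NT) (u z : List T) (c : ℕ) : Prop :=
  ∀ ⦃x m⦄, g.DerivesIn [.nonterminal B] x m → g.DerivesIn s (u ++ x ++ z) (c + m)

namespace IsContext

variable {s : List (Symbol T g.NT)} {B C : g.NT} {u v x y z u' z' : List T} {c c' m : ℕ}

theorem refl (B : g.NT) : g.IsContext [.nonterminal B] B [] [] 0 :=
  fun _ _ h => by simpa using h

theorem trans (h₁ : g.IsContext s B u z c) (h₂ : g.IsContext [.nonterminal B] C u' z' c') :
    g.IsContext s C (u ++ u') (z' ++ z) (c + c') :=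
  fun _ _ h => by simpa [List.append_assoc, add_assoc] using h₁ (h₂ h)

theorem pump (h : g.IsContext [.nonterminal B] B v y c) (hx : g.DerivesIn [.nonterminal B] x m)
    (i : ℕ) : g.DerivesIn [.nonterminal B]
      ((List.replicate i v).flatten ++ x ++ (List.replicate i y).flatten) (i * c + m) := by
  induction i with
  | zero => simpa using hx
  | succ i ih =>
      rw [List.replicate_succ, List.replicate_succ', List.flatten_cons, List.flatten_append]
      simpa [add_mul, add_right_comm, add_comm c] using h ih

end IsContext

variable (g) in
def Subderivation (A : g.NT) (w : List T) (n : ℕ) (B : g.NT) (x : List T) (m : ℕ) : Prop :=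
  g.DerivesIn [.nonterminal B] x m ∧
    ∃ u z c, g.IsContext [.nonterminal A] B u z c ∧ w = u ++ x ++ z ∧ n = c + m

namespace Subderivation

variable {A B C : g.NT} {w x y : List T} {n m k : ℕ}

theorem refl (h : g.DerivesIn [.nonterminal A] w n) : g.Subderivation A w n A w n :=
  ⟨h, [], [], 0, .refl A, by simp, by simp⟩

theorem trans (h₁ : g.Subderivation A w n B x m) (h₂ : g.Subderivation B x m C y k) :
    g.Subderivation A w n C y k := by
  obtain ⟨-, u, z, c, hc, rfl, rfl⟩ := h₁
  obtain ⟨hy, u', z', c', hc', rfl, rfl⟩ := h₂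
  exact ⟨hy, u ++ u', z' ++ z, c + c', hc.trans hc', by simp, by omega⟩

theorem le (h : g.Subderivation A w n B x m) : m ≤ n := by
  obtain ⟨-, -, -, c, -, -, rfl⟩ := h
  omega

theorem length_le (h : g.Subderivation A w n B x m) : x.length ≤ w.length := by
  obtain ⟨-, u, z, -, -, rfl, -⟩ := h
  simp only [List.length_append]
  omega

end Subderivation

variable (g) in
def HasRepeatedNonterminal (A : g.NT) (w : List T) (n : ℕ) : Prop :=
  ∃ B x m y k, g.Subderivation A w n B x m ∧ g.Subderivation B x m B y k ∧ k < m

theorem Subderivation.hasRepeatedNonterminal {A B : g.NT} {w x : List T} {n m : ℕ}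
    (h : g.Subderivation A w n B x m) (hB : g.HasRepeatedNonterminal B x m) :
    g.HasRepeatedNonterminal A w n :=
  let ⟨C, y, k, y', k', h₁, h₂, hk⟩ := hB
  ⟨C, y, k, y', k', h.trans h₁, h₂, hk⟩

section Descent

variable {s : List (Symbol T g.NT)} {A : g.NT} {w : List T} {n K B : ℕ}

theorem DerivesIn.exists_isContext_of_mul_lt_length (hB : 0 < B) (h : g.DerivesIn s w n)
    (hw : s.length * B < w.length) :
    ∃ A x m u z c, g.DerivesIn [.nonterminal A] x m ∧ B < x.length ∧
      g.IsContext s A u z c ∧ w = u ++ x ++ z ∧ n = c + m := by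
  induction h with
  | nil => simp at hw
  | terminal t _ ih =>
      simp only [List.length_cons, add_mul, one_mul] at hw
      obtain ⟨A, x, m, u, z, c, hx, hxB, hc, rfl, rfl⟩ := ih (by omega)
      exact ⟨A, x, m, t :: u, z, c, hx, hxB, fun _ _ h => (hc h).terminal t, rfl, rfl⟩
  | @nonterminal r s u w m n hr hu hw' _ ih =>
      by_cases huB : B < u.length
      · exact ⟨r.input, u, m + 1, [], w, n, .singleton hr hu, huB,
          fun _ _ h => by simpa [add_comm n] using h.append hw', by simp, by omega⟩
      · simp only [List.length_cons, add_mul, one_mul, List.length_append] at hw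
        obtain ⟨A, x, m', u', z, c, hx, hxB, hc, rfl, rfl⟩ := ih (by omega)
        exact ⟨A, x, m', u ++ u', z, m + c + 1, hx, hxB,
          fun _ k h => by
            simpa [show m + c + 1 + k = m + (c + k) + 1 by omega] using
              DerivesIn.nonterminal hr hu (hc h),
          by simp, by omega⟩

theorem DerivesIn.exists_subderivation_of_mul_lt_length
    (hK : ∀ r ∈ g.rules, r.output.length ≤ K) (hB : 0 < B)
    (h : g.DerivesIn [.nonterminal A] w n) (hw : K * B < w.length) :
    ∃ A' x m, g.Subderivation A w n A' x m ∧ m < n ∧ B < x.length := by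
  obtain ⟨r, hr, rfl, n, hout, rfl⟩ := h.exists_of_singleton
  obtain ⟨A', x, m, u, z, c, hx, hxB, hc, rfl, rfl⟩ :=
    hout.exists_isContext_of_mul_lt_length hB ((Nat.mul_le_mul_right B (hK r hr)).trans_lt hw)
  exact ⟨A', x, m, ⟨hx, u, z, c + 1,
    fun _ _ h => by simpa [add_right_comm] using DerivesIn.singleton hr (hc h), rfl, by omega⟩,
    by omega, hxB⟩

theorem DerivesIn.exists_subderivation_of_pow_lt_length
    (hK : ∀ r ∈ g.rules, r.output.length ≤ K) (hK₀ : 0 < K) (j : ℕ)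
    (h : g.DerivesIn [.nonterminal A] w n) (hw : K ^ j < w.length) :
    ∃ B x m, g.Subderivation A w n B x m ∧ K ^ j < x.length ∧ x.length ≤ K ^ (j + 1) := by
  induction n using Nat.strong_induction_on generalizing A w with
  | _ n ih =>
  by_cases hw' : w.length ≤ K ^ (j + 1)
  · exact ⟨A, w, n, .refl h, hw, hw'⟩
  obtain ⟨A', x, m, hsub, hmn, hx⟩ :=
    h.exists_subderivation_of_mul_lt_length hK (pow_pos hK₀ j) (by rw [← pow_succ']; omega)
  obtain ⟨B, y, k, hsub', hy⟩ := ih m hmn hsub.1 hx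
  exact ⟨B, y, k, hsub.trans hsub', hy⟩

/-- `S` collects the nonterminals met on the way down from the root; every descent step uses up
one of the `(inputs \ S).card` nonterminals not yet met. -/
theorem DerivesIn.hasRepeatedNonterminal_or_exists_subderivation [DecidableEq g.NT]
    (hK : ∀ r ∈ g.rules, r.output.length ≤ K) (hK₀ : 0 < K) {j : ℕ} (S : Finset g.NT)
    (h : g.DerivesIn [.nonterminal A] w n) (hw : K ^ j < w.length)
    (hS : (g.rules.image ContextFreeRule.input \ S).card ≤ j) :
    g.HasRepeatedNonterminal A w n ∨ ∃ B ∈ S, ∃ x m, g.Subderivation A w n B x m := by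
  induction j generalizing A w n S with
  | zero =>
      refine .inr ⟨A, ?_, w, n, .refl h⟩
      obtain ⟨r, hr, rfl, -⟩ := h.exists_of_singleton
      rw [Nat.le_zero, Finset.card_eq_zero, Finset.sdiff_eq_empty_iff_subset] at hS
      exact hS (Finset.mem_image_of_mem _ hr)
  | succ j ih =>
      by_cases hA : A ∈ S
      · exact .inr ⟨A, hA, w, n, .refl h⟩
      obtain ⟨A', x, m, hsub, hmn, hx⟩ :=
        h.exists_subderivation_of_mul_lt_length hK (pow_pos hK₀ j) (by rwa [← pow_succ'])
      have hS' : (g.rules.image ContextFreeRule.input \ insert A S).card ≤ j := by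
        obtain ⟨r, hr, rfl, -⟩ := h.exists_of_singleton
        rw [Finset.sdiff_insert, Finset.card_erase_of_mem
          (Finset.mem_sdiff.2 ⟨Finset.mem_image_of_mem _ hr, hA⟩)]
        omega
      rcases ih (insert A S) hsub.1 hx hS' with hrep | ⟨B, hB, y, k, hsub'⟩
      · exact .inl (hsub.hasRepeatedNonterminal hrep)
      rcases Finset.mem_insert.mp hB with rfl | hB
      · exact .inl ⟨B, w, n, y, k, .refl h, hsub.trans hsub', hsub'.le.trans_lt hmn⟩
      · exact .inr ⟨B, hB, y, k, hsub.trans hsub'⟩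

end Descent

end ContextFreeGrammar

open ContextFreeGrammar in
theorem Language.IsContextFree.pumping_lemma {T : Type*} {L : Language T} (hL : L.IsContextFree) :
    ∃ p, ∀ w ∈ L, p ≤ w.length → ∃ u v x y z, w = u ++ v ++ x ++ y ++ z ∧ v ++ y ≠ [] ∧
      (v ++ x ++ y).length ≤ p ∧
      ∀ i, u ++ (List.replicate i v).flatten ++ x ++ (List.replicate i y).flatten ++ z ∈ L := by
  classical
  obtain ⟨g, rfl⟩ := hL
  set K := (g.rules.sup fun r ↦ r.output.length) + 1
  have hK (r) (hr : r ∈ g.rules) : r.output.length ≤ K :=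
    (Finset.le_sup (f := fun r ↦ r.output.length) hr).trans (Nat.le_succ _)
  have hK₀ : 0 < K := Nat.succ_pos _
  set k := (g.rules.image ContextFreeRule.input).card
  refine ⟨K ^ (k + 1) + 1, fun w hw hlen ↦ ?_⟩
  have hex : ∃ N, g.DerivesIn [.nonterminal g.initial] w N := DerivesIn.exists_of_derives hw
  obtain ⟨A, w₁, n₁, hsub₁, hw₁, hw₁'⟩ := (Nat.find_spec hex).exists_subderivation_of_pow_lt_length
    hK hK₀ k ((Nat.pow_le_pow_right hK₀ (Nat.le_add_right k 1)).trans_lt (by omega))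
  obtain ⟨B, x₁, m₁, x, m, hsub, ⟨hx, v, y, c, hc, rfl, rfl⟩, hlt⟩ :=
    (hsub₁.1.hasRepeatedNonterminal_or_exists_subderivation hK hK₀ ∅ hw₁
      (by simp [k])).resolve_right (by simp)
  obtain ⟨-, u, z, c', hc', rfl, hN⟩ := hsub₁.trans hsub
  refine ⟨u, v, x, y, z, by simp, fun hvy ↦ ?_,
    (hsub.length_le.trans hw₁').trans (Nat.le_succ _), fun i ↦ ?_⟩
  · rw [List.append_eq_nil_iff] at hvy
    refine Nat.find_min hex (m := c' + m) (by omega) ?_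
    simpa [hvy] using hc' hx
  · simpa using (hc' (hc.pump hx i)).derives

theorem List.IsInfix.middle_isInfix {α : Type*} {s X Y Z : List α} {a b : α}
    (h : s <:+: X ++ Y ++ Z) (ha : a ∈ s) (haY : a ∉ Y) (haZ : a ∉ Z) (hb : b ∈ s) (hbX : b ∉ X)
    (hbY : b ∉ Y) : Y <:+: s := by
  obtain ⟨u, z, h⟩ := h
  rw [List.append_assoc u, List.append_assoc X] at h
  rcases List.append_eq_append_iff.mp h with ⟨X', rfl, hs⟩ | ⟨_, -, hYZ⟩
  · rw [← List.append_assoc] at hs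
    rcases List.append_eq_append_iff.mp hs with ⟨_, hXY, -⟩ | ⟨Z', rfl, -⟩
    · rcases List.mem_append.1 (hXY ▸ List.mem_append_left _ hb) with hb' | hb'
      · exact absurd (List.mem_append_right _ hb') hbX
      · exact absurd hb' hbY
    · exact ⟨X', Z', rfl⟩
  · rcases List.mem_append.1 (hYZ ▸ List.mem_append_right _ (List.mem_append_left _ ha))
      with ha' | ha'
    · exact absurd ha' haY
    · exact absurd ha' haZ

theorem List.IsInfix.not_mem_or_not_mem {α : Type*} {s : List α} {a b c : α} {k n l : ℕ}
    (h : s <:+: replicate k a ++ replicate n b ++ replicate l c) (hab : a ≠ b) (hac : a ≠ c)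
    (hbc : b ≠ c) (hs : s.length < n) : a ∉ s ∨ c ∉ s := by
  by_contra! h'
  have := (h.middle_isInfix h'.1 (by simp [hab]) (by simp [hac]) h'.2 (by simp [hac.symm])
    (by simp [hbc.symm])).length_le
  simp only [length_replicate] at this
  omega

theorem List.count_pump {α : Type*} [BEq α] (a : α) (u v x y z : List α) (i : ℕ) :
    (u ++ (replicate (i + 1) v).flatten ++ x ++ (replicate (i + 1) y).flatten ++ z).count a =
      (u ++ v ++ x ++ y ++ z).count a + i * (v ++ y).count a := by
  simp only [count_append, count_flatten, map_replicate, sum_replicate, smul_eq_mul]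
  ring

theorem List.count_zero_add_count_one_add_count_two (l : List (Fin 3)) :
    l.count 0 + l.count 1 + l.count 2 = l.length := by
  simpa [Fin.sum_univ_three] using
    Multiset.sum_count_eq_card (s := .univ) (m := (l : Multiset (Fin 3))) (by simp)

/-- The counts of `a`, `b`, `c` in `aᵐ bᴺ cᵐ`, `m = N + N!`, after `i` extra pumpings of a part
with counts `c₀, c₁, c₂`, violate the condition defining `L₃`. -/
theorem exists_pumping_exponent {N c₀ c₁ c₂ : ℕ} (hN : 3 ≤ N) (hc : c₀ = 0 ∨ c₂ = 0)
    (hpos : 0 < c₀ + c₁ + c₂) (hc₁ : c₁ ≤ N) :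
    ∃ i, ¬ (N + N.factorial + i * c₀ ≠ N + i * c₁ ∧
      (N + N.factorial + i * c₀ = N + N.factorial + i * c₂ ∨
        N + i * c₁ = N + N.factorial + i * c₂)) := by
  have hfac := Nat.lt_factorial_self hN
  by_cases h₀₂ : c₀ = 0 ∧ c₂ = 0
  · refine ⟨N.factorial / c₁, fun h ↦ h.1 ?_⟩
    rw [h₀₂.1, Nat.div_mul_cancel (Nat.dvd_factorial (by omega) hc₁)]
    omega
  · refine ⟨1, fun h ↦ ?_⟩
    omega

/-- The language `L₃ = { w ∈ {a,b,c}* : |w|ₐ ≠ |w|_b ∧ (|w|ₐ = |w|_c ∨ |w|_b = |w|_c) }`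
(over the alphabet `Fin 3`, with `a = 0`, `b = 1`, `c = 2`) is not context-free. -/
theorem L3_not_contextFree :
    ¬ Language.IsContextFree
      { w : List (Fin 3) |
        w.count 0 ≠ w.count 1 ∧ (w.count 0 = w.count 2 ∨ w.count 1 = w.count 2) } := by
  intro hL
  obtain ⟨p, hp⟩ := hL.pumping_lemma
  set N := p + 3
  set m := N + N.factorial
  obtain ⟨u, v, x, y, z, hw, hvy, hvxy, hpump⟩ :=
    hp (List.replicate m 0 ++ List.replicate N 1 ++ List.replicate m 2)
      (by
        change _ ∧ _
        simp [List.count_replicate, m, Nat.factorial_ne_zero]) (by simp; omega)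
  have hcontig : (v ++ y).count 0 = 0 ∨ (v ++ y).count 2 = 0 := by
    have hinfix : v ++ x ++ y <:+: List.replicate m 0 ++ List.replicate N 1 ++ List.replicate m 2 :=
      ⟨u, z, by simp [hw]⟩
    have hsub : (v ++ y).Sublist (v ++ x ++ y) := by simp
    exact (hinfix.not_mem_or_not_mem (by decide) (by decide) (by decide) (by omega)).imp
      (fun h ↦ List.count_eq_zero.2 fun h' ↦ h (hsub.subset h'))
      (fun h ↦ List.count_eq_zero.2 fun h' ↦ h (hsub.subset h'))
  have hsum := (v ++ y).count_zero_add_count_one_add_count_two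
  have hvy' := List.length_pos_of_ne_nil hvy
  simp only [List.length_append] at hvxy hvy' hsum
  obtain ⟨i, hi⟩ := exists_pumping_exponent (N := N) (c₁ := (v ++ y).count 1) (by omega)
    hcontig (by omega) (by omega)
  apply hi
  have hmem : _ ∧ _ := hpump (i + 1)
  simp only [List.count_pump, ← hw] at hmem
  simpa [List.count_replicate, m] using hmem
end

section
/- For every natural number p ≥ 3, the string w = a^{p!+p} b^{p} c^{p!+p} violates the context-free pumping property for L₃: w is a member of L₃, p ≤ |w|, and for every factorization w = u v x y z with |v x y| ≤ p and v y nonempty, there exists a natural number i such that u v^i x y^i z ∉ L₃. -/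
/-!
Pumping `u v x y z` by `i + 1` adds `i · δ_σ` to the number of each letter `σ`, where
`δ_σ = |vy|_σ`. A factor of length at most `p` cannot contain both an `a` and a `c`, since it
would have to cover the whole block `b^p`; so `δ_a = 0` or `δ_c = 0`. If only `b`s are pumped,
then `δ_b ≤ p` divides `p!`, and pumping `p!/δ_b` more times makes `|w|_b = p! + p = |w|_a`.
Otherwise pumping once more destroys both `|w|_a = |w|_c` and `|w|_b = |w|_c`, because the
`b`-count stays below `p! + p`.
-/

open List Nat

namespace List

variable {α : Type*} [DecidableEq α]

theorem sum_univ_count_eq_length [Fintype α] (l : List α) : ∑ a, l.count a = l.length := by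
  induction l with
  | nil => simp
  | cons b l ih => simp [count_cons, Finset.sum_add_distrib, ih]

theorem count_take_replicate_append {a : α} {t : List α} (ha : a ∉ t) (m ℓ : ℕ) :
    ((replicate m a ++ t).take ℓ).count a = min ℓ m := by
  simp [take_append, take_replicate, count_eq_zero_of_not_mem (fun h => ha (mem_of_mem_take h))]

theorem count_take_append_replicate {c : α} {t : List α} (hc : c ∉ t) (n ℓ : ℕ) :
    ((t ++ replicate n c).take ℓ).count c = min (ℓ - t.length) n := by
  simp [take_append, take_replicate, count_eq_zero_of_not_mem (fun h => hc (mem_of_mem_take h))]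

theorem count_sub_eq_count_take {w u s z : List α} (h : w = u ++ s ++ z) (a : α) :
    s.count a = (w.take (u.length + s.length)).count a - (w.take u.length).count a := by
  subst h
  simp [append_assoc, take_append, count_append, take_of_length_le]

theorem count_eq_zero_or_count_eq_zero_of_length_le {a b c : α} (hab : a ≠ b) (hac : a ≠ c)
    (hbc : b ≠ c) {m q n : ℕ} {u s z : List α}
    (h : replicate m a ++ replicate q b ++ replicate n c = u ++ s ++ z) (hs : s.length ≤ q) :
    s.count a = 0 ∨ s.count c = 0 := by
  have ha : a ∉ replicate q b ++ replicate n c := by simp [mem_replicate, hab, hac]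
  have hc : c ∉ replicate m a ++ replicate q b := by simp [mem_replicate, hac.symm, hbc.symm]
  have hca := count_sub_eq_count_take h a
  have hcc := count_sub_eq_count_take h c
  rw [append_assoc, count_take_replicate_append ha, count_take_replicate_append ha] at hca
  rw [count_take_append_replicate hc, count_take_append_replicate hc] at hcc
  simp only [length_append, length_replicate] at hcc
  omega

theorem count_pump_succ (a : α) (u v x y z : List α) (i : ℕ) :
    (u ++ (replicate (i + 1) v).flatten ++ x ++ (replicate (i + 1) y).flatten ++ z).count a
      = (u ++ v ++ x ++ y ++ z).count a + i * (v ++ y).count a := by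
  simp only [count_append, count_flatten, map_replicate, sum_replicate, smul_eq_mul]
  ring

end List

def L3Counts (n₀ n₁ n₂ : ℕ) : Prop :=
  n₀ ≠ n₁ ∧ (n₀ = n₂ ∨ n₁ = n₂)

theorem exists_not_L3Counts_pump (p : ℕ) {δ₀ δ₁ δ₂ : ℕ} (hδ : δ₀ = 0 ∨ δ₂ = 0)
    (hpos : 0 < δ₀ + δ₁ + δ₂) (hle : δ₀ + δ₁ + δ₂ ≤ p) :
    ∃ i, ¬ L3Counts (p ! + p + i * δ₀) (p + i * δ₁) (p ! + p + i * δ₂) := by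
  unfold L3Counts
  have hp := self_le_factorial p
  by_cases hb : δ₀ = 0 ∧ δ₂ = 0
  · obtain ⟨rfl, rfl⟩ := hb
    have hdvd : δ₁ ∣ p ! := dvd_factorial (by omega) (by omega)
    refine ⟨p ! / δ₁, fun h => h.1 ?_⟩
    rw [Nat.div_mul_cancel hdvd]
    omega
  · refine ⟨1, ?_⟩
    omega

theorem L3_pumping_violated_general (p : ℕ) :
    (List.replicate (p.factorial + p) (0 : Fin 3) ++ List.replicate p 1 ++
        List.replicate (p.factorial + p) 2) ∈
      { w : List (Fin 3) |
        w.count 0 ≠ w.count 1 ∧ (w.count 0 = w.count 2 ∨ w.count 1 = w.count 2) } ∧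
    p ≤ (List.replicate (p.factorial + p) (0 : Fin 3) ++ List.replicate p 1 ++
        List.replicate (p.factorial + p) 2).length ∧
    ∀ u v x y z : List (Fin 3),
      List.replicate (p.factorial + p) (0 : Fin 3) ++ List.replicate p 1 ++
          List.replicate (p.factorial + p) 2 = u ++ v ++ x ++ y ++ z →
      (v ++ x ++ y).length ≤ p →
      v ++ y ≠ [] →
      ∃ i : ℕ,
        u ++ (List.replicate i v).flatten ++ x ++ (List.replicate i y).flatten ++ z ∉
          { w : List (Fin 3) |
            w.count 0 ≠ w.count 1 ∧ (w.count 0 = w.count 2 ∨ w.count 1 = w.count 2) } := by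
  have hfac := p.factorial_pos
  refine ⟨by simp [count_append, count_replicate]; omega, by simp; omega, ?_⟩
  intro u v x y z hw hlen hne
  have hδ : (v ++ y).count 0 = 0 ∨ (v ++ y).count 2 = 0 := by
    have := count_eq_zero_or_count_eq_zero_of_length_le (a := (0 : Fin 3)) (b := 1) (c := 2)
      (by decide) (by decide) (by decide)
      (by simpa only [append_assoc] using hw) hlen
    simp only [count_append] at this ⊢
    omega
  have hsum := (v ++ y).sum_univ_count_eq_length
  rw [Fin.sum_univ_three] at hsum
  have hvy : 0 < (v ++ y).length := length_pos_iff.mpr hne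
  have hvy_le : (v ++ y).length ≤ (v ++ x ++ y).length := by simp only [length_append]; omega
  obtain ⟨i, hi⟩ := exists_not_L3Counts_pump p (δ₁ := (v ++ y).count 1) hδ (by omega) (by omega)
  have hpump (a : Fin 3) := count_pump_succ a u v x y z i
  rw [← hw] at hpump
  refine ⟨i + 1, fun hmem => hi ?_⟩
  rw [Set.mem_ofPred_eq, hpump, hpump, hpump] at hmem
  simpa [L3Counts, count_replicate] using hmem

/-- For every `p ≥ 3`, the string `w = a^{p!+p} b^p c^{p!+p}` (over `Fin 3`, with
`a = 0`, `b = 1`, `c = 2`) witnesses the failure of the context-free pumping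
property for `L₃`: `w ∈ L₃`, `p ≤ |w|`, and for every factorization
`w = u v x y z` with `|v x y| ≤ p` and `v y` nonempty, there is an `i` with
`u v^i x y^i z ∉ L₃`.  Here the `i`-fold repetition `v^i` is expressed as
`(List.replicate i v).flatten`. -/
theorem L3_pumping_violated (p : ℕ) (hp : 3 ≤ p) :
    (List.replicate (p.factorial + p) (0 : Fin 3) ++ List.replicate p 1 ++
        List.replicate (p.factorial + p) 2) ∈
      { w : List (Fin 3) |
        w.count 0 ≠ w.count 1 ∧ (w.count 0 = w.count 2 ∨ w.count 1 = w.count 2) } ∧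
    p ≤ (List.replicate (p.factorial + p) (0 : Fin 3) ++ List.replicate p 1 ++
        List.replicate (p.factorial + p) 2).length ∧
    ∀ u v x y z : List (Fin 3),
      List.replicate (p.factorial + p) (0 : Fin 3) ++ List.replicate p 1 ++
          List.replicate (p.factorial + p) 2 = u ++ v ++ x ++ y ++ z →
      (v ++ x ++ y).length ≤ p →
      v ++ y ≠ [] →
      ∃ i : ℕ,
        u ++ (List.replicate i v).flatten ++ x ++ (List.replicate i y).flatten ++ z ∉
          { w : List (Fin 3) |
            w.count 0 ≠ w.count 1 ∧ (w.count 0 = w.count 2 ∨ w.count 1 = w.count 2) } :=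
  L3_pumping_violated_general p
end

section
/- The language L₄ = { w ∈ {a,b,c}* : |w|ₐ = |w|_b and |w|ₐ ≠ |w|_c } is not context-free, i.e., there is no context-free grammar generating L₄. -/
/-!
Pumping lemma without normal forms. Descend from the root of a derivation of `w`, always into a
child carrying at least a `1 / branching` share of its parent's yield. Once the yield is at most
`pumpingLength = branching ^ (|inputs| + 1)`, record each nonterminal at which the yield strictly
shrinks. The yield stays above `branching ^ (|inputs| - #recorded)`, so some nonterminal `C` is met
again after being recorded, which gives `C ⇒* v C x` with `|v t x| ≤ pumpingLength`; because the
yield shrank in between, `v ++ x ≠ []` even though unit and ε-rules are allowed.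

For `L₄`, pump `z = a^n c^(p+1) b^n` with `n = p + 1 + p!`. The window `v t x` is shorter than the
block of `c`s, so it cannot meet both the `a`s and the `b`s; as pumping preserves `|·|ₐ = |·|_b`,
`v x` consists of `d ∈ [1, p]` letters `c`. Pumping `p! / d` more times gives `|·|ₐ = |·|_c`.
(The letters `a, b, c` are `0, 1, 2 : Fin 3`.)
-/

open List

lemma Nat.pow_lt_of_pow_succ_lt_of_le_mul {K j a b : ℕ} (h₁ : K ^ (j + 1) < a) (h₂ : a ≤ b * K) :
    K ^ j < b :=
  Nat.lt_of_mul_lt_mul_right (a := K) (by rw [← pow_succ]; omega)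

namespace ContextFreeRule

variable {T N : Type*} {r : ContextFreeRule T N}

lemma Rewrites.append_cases {α β v : List (Symbol T N)} (h : r.Rewrites (α ++ β) v) :
    (∃ α', r.Rewrites α α' ∧ v = α' ++ β) ∨ (∃ β', r.Rewrites β β' ∧ v = α ++ β') := by
  induction α generalizing v with
  | nil => exact .inr ⟨v, h, rfl⟩
  | cons a α ih =>
    cases h with
    | head s => exact .inl ⟨r.output ++ α, .head α, by simp⟩
    | cons _ h =>
      rcases ih h with ⟨α', hα, rfl⟩ | ⟨β', hβ, rfl⟩
      · exact .inl ⟨a :: α', hα.cons a, rfl⟩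
      · exact .inr ⟨β', hβ, rfl⟩

end ContextFreeRule

namespace ContextFreeGrammar

variable {T : Type*} {g : ContextFreeGrammar T}

inductive DerivesIn_s2 (g : ContextFreeGrammar T) :
    List (Symbol T g.NT) → List (Symbol T g.NT) → ℕ → Prop
  | refl (u : List (Symbol T g.NT)) : g.DerivesIn_s2 u u 0
  | head {u v w : List (Symbol T g.NT)} {n : ℕ} :
      g.Produces u v → g.DerivesIn_s2 v w n → g.DerivesIn_s2 u w (n + 1)

section DerivesIn_s2

variable {u v : List (Symbol T g.NT)} {n : ℕ}

lemma DerivesIn_s2.derives (h : g.DerivesIn_s2 u v n) : g.Derives u v := by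
  induction h with
  | refl => rfl
  | head huv _ ih => exact huv.trans_derives ih

lemma Derives.exists_derivesIn (h : g.Derives u v) : ∃ n, g.DerivesIn_s2 u v n := by
  induction h using Relation.ReflTransGen.head_induction_on with
  | refl => exact ⟨0, .refl v⟩
  | head huv _ ih => exact ⟨ih.choose + 1, .head huv ih.choose_spec⟩

lemma DerivesIn_s2.append_split {α β : List (Symbol T g.NT)} (h : g.DerivesIn_s2 (α ++ β) v n) :
    ∃ v₁ v₂ n₁ n₂, v = v₁ ++ v₂ ∧ n₁ + n₂ = n ∧ g.DerivesIn_s2 α v₁ n₁ ∧ g.DerivesIn_s2 β v₂ n₂ := by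
  induction n generalizing α β with
  | zero =>
    cases h
    exact ⟨α, β, 0, 0, rfl, rfl, .refl α, .refl β⟩
  | succ n ih =>
    obtain _ | ⟨⟨r, hr, hαβ⟩, h⟩ := h
    rcases hαβ.append_cases with ⟨α', hα, rfl⟩ | ⟨β', hβ, rfl⟩
    · obtain ⟨v₁, v₂, n₁, n₂, rfl, rfl, h₁, h₂⟩ := ih h
      exact ⟨v₁, v₂, n₁ + 1, n₂, rfl, by omega, .head ⟨r, hr, hα⟩ h₁, h₂⟩
    · obtain ⟨v₁, v₂, n₁, n₂, rfl, rfl, h₁, h₂⟩ := ih h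
      exact ⟨v₁, v₂, n₁, n₂ + 1, rfl, by omega, h₁, .head ⟨r, hr, hβ⟩ h₂⟩

lemma DerivesIn_s2.map_terminal_append_split {α β : List (Symbol T g.NT)} {w : List T}
    (h : g.DerivesIn_s2 (α ++ β) (w.map .terminal) n) :
    ∃ w₁ w₂ n₁ n₂, w = w₁ ++ w₂ ∧ n₁ + n₂ = n ∧
      g.DerivesIn_s2 α (w₁.map .terminal) n₁ ∧ g.DerivesIn_s2 β (w₂.map .terminal) n₂ := by
  obtain ⟨v₁, v₂, n₁, n₂, hv, hn, h₁, h₂⟩ := h.append_split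
  obtain ⟨w₁, w₂, rfl, rfl, rfl⟩ := List.map_eq_append_iff.mp hv
  exact ⟨w₁, w₂, n₁, n₂, rfl, hn, h₁, h₂⟩

lemma DerivesIn_s2.exists_first_rule {A : g.NT} {w : List T}
    (h : g.DerivesIn_s2 [.nonterminal A] (w.map .terminal) n) :
    ∃ r ∈ g.rules, r.input = A ∧ ∃ m < n, g.DerivesIn_s2 r.output (w.map .terminal) m := by
  generalize hv : w.map Symbol.terminal = v at h
  obtain _ | ⟨⟨r, hr, hA⟩, h⟩ := h
  · cases w <;> simp at hv
  · obtain _ | ⟨_, hnil⟩ := hA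
    · exact ⟨r, hr, rfl, _, Nat.lt_succ_self _, by simpa using h⟩
    · nomatch hnil

lemma DerivesIn_s2.exists_heavy_symbol {α : List (Symbol T g.NT)} {w : List T}
    (h : g.DerivesIn_s2 α (w.map .terminal) n) (hw : w ≠ []) :
    ∃ s l r w' n', w = l ++ w' ++ r ∧ n' ≤ n ∧ w.length ≤ w'.length * α.length ∧
      g.Derives α (l.map .terminal ++ [s] ++ r.map .terminal) ∧
      g.DerivesIn_s2 [s] (w'.map .terminal) n' := by
  induction α generalizing w n with
  | nil =>
    generalize hv : w.map Symbol.terminal = v at h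
    obtain _ | ⟨⟨r, -, hr⟩, -⟩ := h
    · simp_all
    · nomatch hr
  | cons a α ih =>
    obtain ⟨w₁, w₂, n₁, n₂, rfl, rfl, h₁, h₂⟩ := DerivesIn_s2.map_terminal_append_split (α := [a]) h
    by_cases hheavy : (w₁ ++ w₂).length ≤ w₁.length * (α.length + 1)
    · refine ⟨a, [], w₂, w₁, _, by simp, by omega, by simpa using hheavy, ?_, h₁⟩
      simpa using h₂.derives.append_left [a]
    · have hw₂ : w₂ ≠ [] := by rintro rfl; simp at hheavy; nlinarith
      obtain ⟨s, l, r, w', n', rfl, hn', hlen, hctx, hs⟩ := ih h₂ hw₂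
      refine ⟨s, w₁ ++ l, r, w', n', by simp, by omega, ?_, ?_, hs⟩
      · simp only [length_append, length_cons] at hheavy hlen ⊢
        nlinarith
      · simpa using (h₁.derives.append_right α).trans (hctx.append_left _)

end DerivesIn_s2

lemma derives_terminal {t : T} {v : List (Symbol T g.NT)}
    (h : g.Derives [.terminal t] v) : v = [.terminal t] := by
  induction h with
  | refl => rfl
  | tail _ hp ih =>
    subst ih
    obtain ⟨r, -, hr⟩ := hp.exists_nonterminal_input_mem
    simp at hr

open Classical in
noncomputable def inputs (g : ContextFreeGrammar T) : Finset g.NT :=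
  g.rules.image ContextFreeRule.input

def branching (g : ContextFreeGrammar T) : ℕ :=
  (g.rules.sup fun r => r.output.length) + 1

noncomputable def pumpingLength (g : ContextFreeGrammar T) : ℕ :=
  g.branching ^ (g.inputs.card + 1)

lemma length_output_lt_branching {r : ContextFreeRule T g.NT} (hr : r ∈ g.rules) :
    r.output.length < g.branching :=
  Nat.lt_succ_of_le (Finset.le_sup (f := fun r => r.output.length) hr)

lemma DerivesIn_s2.mem_inputs {A : g.NT} {w : List T} {n : ℕ}
    (h : g.DerivesIn_s2 [.nonterminal A] (w.map .terminal) n) : A ∈ g.inputs := by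
  classical
  obtain ⟨r, hr, rfl, -⟩ := h.exists_first_rule
  simpa [inputs] using ⟨r, hr, rfl⟩

def Embeds (g : ContextFreeGrammar T) (A : g.NT) (w : List T) (B : g.NT) (w' : List T) : Prop :=
  ∃ u y, w = u ++ w' ++ y ∧
    g.Derives [.nonterminal A] (u.map .terminal ++ [.nonterminal B] ++ y.map .terminal)

section Embeds

variable {A B C : g.NT} {w w' w'' : List T}

lemma Embeds.refl (A : g.NT) (w : List T) : g.Embeds A w A w :=
  ⟨[], [], by simp, by simpa using Derives.refl _⟩

lemma Embeds.trans (h₁ : g.Embeds A w B w') (h₂ : g.Embeds B w' C w'') : g.Embeds A w C w'' := by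
  obtain ⟨u, y, rfl, hAB⟩ := h₁
  obtain ⟨u', y', rfl, hBC⟩ := h₂
  refine ⟨u ++ u', y' ++ y, by simp, hAB.trans ?_⟩
  simpa using (hBC.append_left _).append_right (y.map Symbol.terminal)

lemma Embeds.length_le (h : g.Embeds A w B w') : w'.length ≤ w.length := by
  obtain ⟨u, y, rfl, -⟩ := h
  simp only [length_append]
  omega

end Embeds

lemma DerivesIn_s2.exists_heavy_child {B : g.NT} {w : List T} {n : ℕ}
    (h : g.DerivesIn_s2 [.nonterminal B] (w.map .terminal) n) (hw : g.branching < w.length) :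
    ∃ C w' m, m < n ∧ g.DerivesIn_s2 [.nonterminal C] (w'.map .terminal) m ∧ g.Embeds B w C w' ∧
      w.length ≤ w'.length * g.branching := by
  obtain ⟨r, hr, rfl, m, hm, hout⟩ := h.exists_first_rule
  obtain ⟨s, l, l', w', n', rfl, hn', hlen, hctx, hs⟩ :=
    hout.exists_heavy_symbol (by rintro rfl; simp at hw)
  have hheavy : (l ++ w' ++ l').length ≤ w'.length * g.branching :=
    hlen.trans (Nat.mul_le_mul_left _ (length_output_lt_branching hr).le)
  cases s with
  | terminal t =>
    have hw' : w' = [t] := by simpa using derives_terminal hs.derives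
    subst hw'
    rw [length_singleton, one_mul] at hheavy
    omega
  | nonterminal C =>
    refine ⟨C, w', n', by omega, hs, ⟨l, l', rfl, ?_⟩, hheavy⟩
    exact Produces.trans_derives ⟨r, hr, ContextFreeRule.Rewrites.input_output⟩ hctx

def StrictAncestors (g : ContextFreeGrammar T) (p : ℕ) (S : g.NT) (w : List T) (X : Finset g.NT)
    (B : g.NT) (wB : List T) : Prop :=
  ∀ C ∈ X, ∃ wC, g.Embeds S w C wC ∧ g.Embeds C wC B wB ∧ wB.length < wC.length ∧ wC.length ≤ p

section StrictAncestors

variable {p : ℕ} {S B C : g.NT} {w wB wC : List T} {X : Finset g.NT}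

lemma StrictAncestors.descend (hX : g.StrictAncestors p S w X B wB) (hBC : g.Embeds B wB C wC) :
    g.StrictAncestors p S w X C wC := fun D hD => by
  obtain ⟨wD, hSD, hDB, hlt, hle⟩ := hX D hD
  exact ⟨wD, hSD, hDB.trans hBC, hBC.length_le.trans_lt hlt, hle⟩

lemma StrictAncestors.insert [DecidableEq g.NT] (hX : g.StrictAncestors p S w X B wB)
    (hSB : g.Embeds S w B wB) (hBC : g.Embeds B wB C wC) (hlt : wC.length < wB.length)
    (hle : wB.length ≤ p) : g.StrictAncestors p S w (insert B X) C wC := fun D hD => by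
  rcases Finset.mem_insert.mp hD with rfl | hD
  · exact ⟨wB, hSB, hBC, hlt, hle⟩
  · exact hX.descend hBC D hD

end StrictAncestors

def HasPumpableRepeat (g : ContextFreeGrammar T) (p : ℕ) (A : g.NT) (w : List T) : Prop :=
  ∃ C w' t, g.Embeds A w C w' ∧ g.Embeds C w' C t ∧ t.length < w'.length ∧ w'.length ≤ p ∧
    g.Derives [.nonterminal C] (t.map .terminal)

/-- `X` holds the nonterminals recorded along the descent; it is reset to `∅` whenever the yield
`wB` is longer than `pumpingLength`. -/
lemma hasPumpableRepeat_of_descent {S B : g.NT} {w wB : List T} {X : Finset g.NT} {n : ℕ}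
    (hB : g.DerivesIn_s2 [.nonterminal B] (wB.map .terminal) n) (hSB : g.Embeds S w B wB)
    (hXN : X ⊆ g.inputs) (hX : g.StrictAncestors g.pumpingLength S w X B wB)
    (hlen : g.branching ^ (g.inputs.card - X.card) < wB.length) :
    g.HasPumpableRepeat g.pumpingLength S w := by
  classical
  induction n using Nat.strong_induction_on generalizing B wB X with
  | _ n ih =>
  by_cases hBX : B ∈ X
  · obtain ⟨wC, hSC, hCB, hlt, hle⟩ := hX B hBX
    exact ⟨B, wC, wB, hSC, hCB, hlt, hle, hB.derives⟩
  have hcard : X.card < g.inputs.card :=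
    Finset.card_lt_card ⟨hXN, fun h => hBX (h hB.mem_inputs)⟩
  obtain ⟨C, wC, m, hm, hC, hBC, hheavy⟩ :=
    hB.exists_heavy_child ((Nat.le_self_pow (by omega) _).trans_lt hlen)
  have hSC := hSB.trans hBC
  rcases lt_or_ge g.pumpingLength wB.length with hbig | hsmall
  · refine ih m hm hC hSC (Finset.empty_subset _) (by simp [StrictAncestors]) ?_
    simpa using Nat.pow_lt_of_pow_succ_lt_of_le_mul hbig hheavy
  rcases hBC.length_le.lt_or_eq with hlt | heq
  · refine ih m hm hC hSC (Finset.insert_subset hB.mem_inputs hXN)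
      (hX.insert hSB hBC hlt hsmall) ?_
    rw [Finset.card_insert_of_notMem hBX]
    refine Nat.pow_lt_of_pow_succ_lt_of_le_mul ?_ hheavy
    rwa [show g.inputs.card - (X.card + 1) + 1 = g.inputs.card - X.card by omega]
  · exact ih m hm hC hSC hXN (hX.descend hBC) (heq ▸ hlen)

lemma hasPumpableRepeat_of_mem_language {w : List T} (hw : w ∈ g.language)
    (hlen : g.pumpingLength < w.length) : g.HasPumpableRepeat g.pumpingLength g.initial w := by
  obtain ⟨n, hn⟩ := Derives.exists_derivesIn hw
  refine hasPumpableRepeat_of_descent hn (.refl _ _) (Finset.empty_subset _)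
    (by simp [StrictAncestors]) (lt_of_le_of_lt ?_ hlen)
  exact Nat.pow_le_pow_right (Nat.succ_pos _) (Nat.le_succ _)

lemma Derives.pump {C : g.NT} {v x : List T}
    (h : g.Derives [.nonterminal C] (v.map .terminal ++ [.nonterminal C] ++ x.map .terminal))
    (i : ℕ) :
    g.Derives [.nonterminal C] ((replicate i v).flatten.map .terminal ++ [.nonterminal C] ++
      (replicate i x).flatten.map .terminal) := by
  induction i with
  | zero => simpa using Derives.refl _
  | succ i ih =>
    rw [replicate_succ, replicate_succ', flatten_cons, flatten_append]
    refine h.trans ?_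
    simpa using (ih.append_left (v.map Symbol.terminal)).append_right (x.map Symbol.terminal)

theorem exists_pumping (g : ContextFreeGrammar T) :
    ∃ p, ∀ w ∈ g.language, p < w.length → ∃ u v t x y, w = u ++ v ++ t ++ x ++ y ∧ v ++ x ≠ [] ∧
      (v ++ t ++ x).length ≤ p ∧
      ∀ i, u ++ (replicate i v).flatten ++ t ++ (replicate i x).flatten ++ y ∈ g.language := by
  refine ⟨g.pumpingLength, fun w hw hlen => ?_⟩
  obtain ⟨C, w', t, ⟨u, y, rfl, hS⟩, ⟨v, x, rfl, hC⟩, hlt, hle, ht⟩ :=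
    hasPumpableRepeat_of_mem_language hw hlen
  refine ⟨u, v, t, x, y, by simp, ?_, by simpa using hle, fun i => ?_⟩
  · intro h
    simp_all
  · refine hS.trans ?_
    have hC' := (hC.pump i).trans ((ht.append_left _).append_right _)
    simpa using (hC'.append_left (u.map Symbol.terminal)).append_right (y.map Symbol.terminal)

end ContextFreeGrammar

theorem Language.IsContextFree.exists_pumping {T : Type*} {L : Language T} (hL : L.IsContextFree) :
    ∃ p, ∀ w ∈ L, p < w.length → ∃ u v t x y, w = u ++ v ++ t ++ x ++ y ∧ v ++ x ≠ [] ∧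
      (v ++ t ++ x).length ≤ p ∧
      ∀ i, u ++ (List.replicate i v).flatten ++ t ++ (List.replicate i x).flatten ++ y ∈ L := by
  obtain ⟨g, rfl⟩ := hL
  exact g.exists_pumping

namespace List

variable {α : Type*}

lemma count_pump_s2 [BEq α] (a : α) (u v t x y : List α) (i : ℕ) :
    (u ++ (replicate i v).flatten ++ t ++ (replicate i x).flatten ++ y).count a =
      (u ++ t ++ y).count a + i * (v ++ x).count a := by
  simp only [count_append, count_flatten, map_replicate, sum_replicate, smul_eq_mul]
  ring

lemma length_le_of_append_eq_append {l₁ l₂ l₃ u m y : List α} {a b : α}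
    (h : u ++ m ++ y = l₁ ++ l₂ ++ l₃) (ha : a ∈ m) (hb : b ∈ m) (ha' : a ∉ l₂ ++ l₃)
    (hb' : b ∉ l₁ ++ l₂) : l₂.length ≤ m.length := by
  have hu : u.length ≤ l₁.length := by
    rw [append_assoc, append_assoc, append_eq_append_iff] at h
    rcases h with ⟨s, rfl, -⟩ | ⟨s, -, hs⟩
    · simp
    · exact absurd (hs ▸ mem_append_right s (mem_append_left y ha)) ha'
  have hy : y.length ≤ l₃.length := by
    rw [append_eq_append_iff] at h
    rcases h with ⟨s, hs, -⟩ | ⟨s, -, rfl⟩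
    · exact absurd (hs ▸ mem_append_left s (mem_append_right u hb)) hb'
    · simp
  have := congrArg length h
  simp only [length_append] at this
  omega

end List

lemma count_zero_eq_zero_of_short_window {n k : ℕ} {u v t x y : List (Fin 3)}
    (hz : replicate n 0 ++ replicate k 2 ++ replicate n 1 = u ++ v ++ t ++ x ++ y)
    (hlen : (v ++ t ++ x).length < k) (h01 : (v ++ x).count 0 = (v ++ x).count 1) :
    (v ++ x).count 0 = 0 := by
  by_contra h
  have hsub : v ++ x <+ v ++ t ++ x := by simp
  have := length_le_of_append_eq_append (u := u) (y := y) (a := 0) (b := 1)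
    (by rw [hz]; simp only [append_assoc]) (hsub.subset (count_pos_iff.mp (by omega)))
    (hsub.subset (count_pos_iff.mp (by omega))) (by simp) (by simp)
  simp only [length_replicate] at this
  omega

lemma count_two_pos {l : List (Fin 3)} (hl : l ≠ []) (h0 : l.count 0 = 0) (h1 : l.count 1 = 0) :
    0 < l.count 2 := by
  obtain ⟨σ, hσ⟩ := exists_mem_of_ne_nil _ hl
  rcases (by decide : ∀ σ : Fin 3, σ = 0 ∨ σ = 1 ∨ σ = 2) σ with rfl | rfl | rfl <;>
    have := count_pos_iff.mpr hσ <;> omega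

/-- The language `L₄ = { w ∈ {a,b,c}* : |w|ₐ = |w|_b ∧ |w|ₐ ≠ |w|_c }`
(over the alphabet `Fin 3`, with `a = 0`, `b = 1`, `c = 2`) is not context-free. -/
theorem L4_not_contextFree :
    ¬ Language.IsContextFree
      { w : List (Fin 3) |
        w.count 0 = w.count 1 ∧ w.count 0 ≠ w.count 2 } := by
  intro hL
  obtain ⟨p, hp⟩ := hL.exists_pumping
  set n := p + 1 + p.factorial
  set z := replicate n (0 : Fin 3) ++ replicate (p + 1) 2 ++ replicate n 1 with hz_def
  have hz0 : z.count 0 = n := by simp [z, count_replicate]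
  have hz1 : z.count 1 = n := by simp [z, count_replicate]
  have hz2 : z.count 2 = p + 1 := by simp [z, count_replicate]
  obtain ⟨u, v, t, x, y, hz, hvx, hlen, hpump⟩ :=
    hp z ⟨hz0.trans hz1.symm, by rw [hz0, hz2]; have := p.factorial_pos; omega⟩ (by simp [z]; omega)
  change ∀ i, _ ∧ _ at hpump
  simp only [count_pump_s2] at hpump
  have hsplit (σ : Fin 3) : z.count σ = (u ++ t ++ y).count σ + (v ++ x).count σ := by
    rw [hz]; simp only [count_append]; ring
  have h01 : (v ++ x).count 0 = (v ++ x).count 1 := by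
    have := (hpump 0).1; have := hsplit 0; have := hsplit 1; omega
  have h0 := count_zero_eq_zero_of_short_window (hz_def ▸ hz) (by omega) h01
  have h2 := count_two_pos hvx h0 (h01 ▸ h0)
  have h2p : (v ++ x).count 2 ≤ p :=
    (Sublist.count_le 2 (by simp)).trans (count_le_length.trans hlen)
  refine (hpump (p.factorial / (v ++ x).count 2 + 1)).2 ?_
  rw [h0, mul_zero, add_mul, one_mul, Nat.div_mul_cancel (Nat.dvd_factorial h2 h2p)]
  have := hsplit 0; have := hsplit 2; omega
end
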